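/- Let p ∈ (1,2) and a > 0, let f = f(·,a) be the unique solution of (|f'|^{p-2} f')' + f - |f'|^{p-1} = 0 on (0,∞) with f(0) = a, f'(0) = 0, and let ψ = ψ(·,a) be defined on [0,1) by ψ(1-f(r)/a) = |f'(r)|^p/a^p. Assume that ψ(y)(1-y)^{-p} → (p-1)^{-p} as y → 1 (so that R(a) := inf{r > 0 : f(r) = 0} = ∞). Then the integral I := ∫_0^∞ e^σ f(σ) dσ is finite, e^r |f'(r)|^{p-1} → I as r → ∞, and f(r) ∼ (p-1) I^{1/(p-1)} e^{-r/(p-1)} as r → ∞, i.e. e^{r/(p-1)} f(r) → (p-1) I^{1/(p-1)} > 0. -/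

import Mathlib

open Set Filter Topology MeasureTheory

/-- The extinction "radius" `R = inf{r > 0 : f(r) = 0}`, as an extended real number
(`⊤` when `f` does not vanish on `(0,∞)`). -/
noncomputable def extTime (f : ℝ → ℝ) : EReal :=
  sInf {x : EReal | ∃ r : ℝ, 0 < r ∧ f r = 0 ∧ x = (r : EReal)}

/-- `f` solves `(|f'|^{p-2} f')' + f - |f'|^{p-1} = 0` on `(0,∞)` with `f(0)=a`, `f'(0)=0`;
`fd` is the derivative of `f` and `gd` the derivative of `|f'|^{p-2} f'`, both continuous
on `[0,∞)`, so that `f ∈ C¹([0,∞))` and `|f'|^{p-2} f' ∈ C¹([0,∞))`. -/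
def IsSol (p a : ℝ) (f fd gd : ℝ → ℝ) : Prop :=
  (∀ r ∈ Set.Ici (0:ℝ), HasDerivWithinAt f (fd r) (Set.Ici 0) r) ∧
  ContinuousOn fd (Set.Ici 0) ∧
  (∀ r ∈ Set.Ici (0:ℝ), HasDerivWithinAt (fun s => |fd s| ^ (p-2) * fd s) (gd r) (Set.Ici 0) r) ∧
  ContinuousOn gd (Set.Ici 0) ∧
  (∀ r ∈ Set.Ioi (0:ℝ), gd r + f r - |fd r| ^ (p-1) = 0) ∧
  f 0 = a ∧ fd 0 = 0

/-- `ψ` is the function associated with `f = f(·,a)` via `ψ(1 - f(r)/a) = |f'(r)|^p/a^p`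
for `r ∈ [0,R(a))`. -/
def PsiRel (p a : ℝ) (f fd ψ : ℝ → ℝ) : Prop :=
  ∀ r : ℝ, 0 ≤ r → (r : EReal) < extTime f → ψ (1 - f r / a) = |fd r| ^ p / a ^ p

/-!
Along the solution, `ψ(1 - f/a) (f/a)^{-p} = (|f'|/f)^p`, so the hypothesis on `ψ` says that
`|f'|/f → 1/(p-1)` wherever `f → 0`. Near a first zero of `f` this would bound the logarithmic
derivative of `f`, so `f > 0` on `[0,∞)`. Then `f' ≤ 0`, and `(e^r |f'|^{p-2} f')' = -e^r f`
integrates to `e^r |f'(r)|^{p-1} = ∫_0^r e^σ f`, which forces `f → 0`. Hence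
`|f'|/f → 1/(p-1) > 1` at infinity, `e^σ f(σ)` decays exponentially, and
`f ~ (p-1) |f'| = (p-1) e^{-r/(p-1)} (e^r |f'|^{p-1})^{1/(p-1)}`.
-/

lemma abs_abs_rpow_sub_two_mul_self {p : ℝ} (hp : p ≠ 1) (x : ℝ) :
    |(|x| ^ (p - 2) * x)| = |x| ^ (p - 1) := by
  rcases eq_or_ne x 0 with rfl | hx
  · simp [Real.zero_rpow (sub_ne_zero.2 hp)]
  · rw [abs_mul, abs_of_nonneg (Real.rpow_nonneg (abs_nonneg x) _),
      ← Real.rpow_add_one (abs_ne_zero.2 hx)]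
    ring_nf

lemma abs_rpow_sub_two_mul_self_of_nonpos {p x : ℝ} (hp : p ≠ 1) (hx : x ≤ 0) :
    |x| ^ (p - 2) * x = -|x| ^ (p - 1) := by
  rw [← abs_abs_rpow_sub_two_mul_self hp,
    abs_of_nonpos (mul_nonpos_of_nonneg_of_nonpos (Real.rpow_nonneg (abs_nonneg x) _) hx),
    neg_neg]

lemma nonpos_of_abs_rpow_mul_self_nonpos {q x : ℝ} (h : |x| ^ q * x ≤ 0) : x ≤ 0 := by
  by_contra! hx
  exact h.not_gt (mul_pos (Real.rpow_pos_of_pos (abs_pos.2 hx.ne') _) hx)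

lemma exists_first_zero {f : ℝ → ℝ} {a b : ℝ} (hab : a ≤ b) (hf : ContinuousOn f (Icc a b))
    (ha : 0 < f a) (hb : f b ≤ 0) : ∃ R ∈ Ioc a b, f R = 0 ∧ ∀ s ∈ Ico a R, 0 < f s := by
  set S := Icc a b ∩ f ⁻¹' Iic 0
  have hSbdd : BddBelow S := ⟨a, fun x hx => hx.1.1⟩
  have hRS : sInf S ∈ S :=
    (hf.preimage_isClosed_of_isClosed isClosed_Icc isClosed_Iic).csInf_mem
      ⟨b, ⟨hab, le_rfl⟩, hb⟩ hSbdd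
  have hpos : ∀ s ∈ Ico a (sInf S), 0 < f s := fun s hs => by
    by_contra! h
    exact (csInf_le hSbdd ⟨⟨hs.1, hs.2.le.trans hRS.1.2⟩, h⟩).not_gt hs.2
  obtain ⟨c, hc, hfc⟩ := intermediate_value_Icc' hRS.1.1
    (hf.mono (Icc_subset_Icc_right hRS.1.2)) ⟨hRS.2, ha.le⟩
  have hcR : c = sInf S := hc.2.eq_or_lt.resolve_right fun h => (hpos c ⟨hc.1, h⟩).ne' hfc
  refine ⟨sInf S, ⟨hRS.1.1.lt_of_ne ?_, hRS.1.2⟩, hcR ▸ hfc, hpos⟩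
  rintro h
  exact (h ▸ ha).not_ge hRS.2

lemma eventually_nhdsGT_neg_of_hasDerivWithinAt {g : ℝ → ℝ} {g' x : ℝ}
    (hg : HasDerivWithinAt g g' (Ioi x) x) (hx : g x = 0) (hg' : g' < 0) :
    ∀ᶠ y in 𝓝[>] x, g y < 0 := by
  have hslope := (hasDerivWithinAt_iff_tendsto_slope' (lt_irrefl x)).1 hg
  filter_upwards [hslope.eventually_lt_const hg', self_mem_nhdsWithin] with y hy hxy
  rw [slope_def_field, hx, sub_zero] at hy
  exact neg_of_div_neg_left hy (sub_nonneg.2 hxy.out.le)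

lemma image_sub_le_mul_sub_of_hasDerivAt_le {f f' : ℝ → ℝ} {C x y : ℝ} (hxy : x ≤ y)
    (hf : ∀ r ∈ Icc x y, HasDerivAt f (f' r) r) (hC : ∀ r ∈ Icc x y, f' r ≤ C) :
    f y - f x ≤ C * (y - x) :=
  (convex_Icc x y).image_sub_le_mul_sub_of_deriv_le
    (fun r hr => (hf r hr).continuousAt.continuousWithinAt)
    (fun r hr => (hf r (interior_subset hr)).differentiableAt.differentiableWithinAt)
    (fun r hr => (hf r (interior_subset hr)).deriv ▸ hC r (interior_subset hr))
    x (left_mem_Icc.2 hxy) y (right_mem_Icc.2 hxy) hxy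

lemma le_mul_exp_of_deriv_div_le {f f' : ℝ → ℝ} {C x y : ℝ} (hxy : x ≤ y)
    (hf : ∀ r ∈ Icc x y, HasDerivAt f (f' r) r) (hpos : ∀ r ∈ Icc x y, 0 < f r)
    (hC : ∀ r ∈ Icc x y, f' r / f r ≤ C) : f y ≤ f x * Real.exp (C * (y - x)) := by
  have hlog := image_sub_le_mul_sub_of_hasDerivAt_le hxy
    (fun r hr => (hf r hr).log (hpos r hr).ne') hC
  rw [← Real.exp_log (hpos y (right_mem_Icc.2 hxy)),
    ← Real.exp_log (hpos x (left_mem_Icc.2 hxy)), ← Real.exp_add, Real.exp_le_exp]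
  linarith

lemma mul_exp_le_of_le_deriv_div {f f' : ℝ → ℝ} {C x y : ℝ} (hxy : x ≤ y)
    (hf : ∀ r ∈ Icc x y, HasDerivAt f (f' r) r) (hpos : ∀ r ∈ Icc x y, 0 < f r)
    (hC : ∀ r ∈ Icc x y, C ≤ f' r / f r) : f x * Real.exp (C * (y - x)) ≤ f y := by
  have hlog := image_sub_le_mul_sub_of_hasDerivAt_le hxy
    (fun r hr => ((hf r hr).log (hpos r hr).ne').neg) (fun r hr => neg_le_neg (hC r hr))
  simp only [Pi.neg_apply] at hlog
  rw [← Real.exp_log (hpos y (right_mem_Icc.2 hxy)),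
    ← Real.exp_log (hpos x (left_mem_Icc.2 hxy)), ← Real.exp_add, Real.exp_le_exp]
  linarith

lemma not_tendsto_nhdsLT_zero_of_le_deriv_div {f f' : ℝ → ℝ} {C c R : ℝ} (hcR : c < R)
    (hf : ∀ r ∈ Ico c R, HasDerivAt f (f' r) r) (hpos : ∀ r ∈ Ico c R, 0 < f r)
    (hC : ∀ r ∈ Ico c R, C ≤ f' r / f r) : ¬Tendsto f (𝓝[<] R) (𝓝 0) := by
  intro hf0
  have hfc := hpos c (left_mem_Ico.2 hcR)
  have hlow : ∀ t ∈ Ico c R, f c * Real.exp (-|C| * (R - c)) ≤ f t := fun t ht =>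
    calc f c * Real.exp (-|C| * (R - c)) ≤ f c * Real.exp (C * (t - c)) := by
          refine mul_le_mul_of_nonneg_left (Real.exp_le_exp.2 ?_) hfc.le
          nlinarith [mul_nonneg (neg_le_iff_add_nonneg.1 (neg_abs_le C)) (sub_nonneg.2 ht.1),
            mul_nonneg (abs_nonneg C) (sub_nonneg.2 ht.2.le)]
      _ ≤ f t := by
          have hsub : Icc c t ⊆ Ico c R := Icc_subset_Ico_right ht.2
          exact mul_exp_le_of_le_deriv_div ht.1 (fun r hr => hf r (hsub hr))
            (fun r hr => hpos r (hsub hr)) fun r hr => hC r (hsub hr)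
  exact (ge_of_tendsto hf0 (mem_of_superset (Ico_mem_nhdsLT hcR) hlow)).not_gt
    (mul_pos hfc (Real.exp_pos _))

lemma integral_Ioi_pos_of_pos {g : ℝ → ℝ} {a : ℝ} (hg : IntegrableOn g (Ioi a))
    (hpos : ∀ x > a, 0 < g x) : 0 < ∫ x in Ioi a, g x := by
  refine (setIntegral_pos_iff_support_of_nonneg_ae ?_ hg).2 ?_
  · exact (ae_restrict_iff' measurableSet_Ioi).2 (.of_forall fun x hx => (hpos x hx).le)
  · have hsupp : Ioi a ⊆ Function.support g := fun x hx => (hpos x hx).ne'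
    rw [inter_eq_right.2 hsupp, Real.volume_Ioi]
    exact ENNReal.zero_lt_top

lemma tendsto_exp_div_mul_of_tendsto {q I : ℝ} {u v : ℝ → ℝ} (hq : 0 < q) (hI : 0 < I)
    (hv : Tendsto (fun r => Real.exp r * |v r| ^ q) atTop (𝓝 I))
    (huv : Tendsto (fun r => |v r| / u r) atTop (𝓝 (1 / q))) :
    Tendsto (fun r => Real.exp (r / q) * u r) atTop (𝓝 (q * I ^ (1 / q))) := by
  have hroot := ((Real.continuousAt_rpow_const _ (1 / q) (Or.inl hI.ne')).tendsto.comp hv).div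
    huv (by positivity)
  rw [div_div_eq_mul_div, div_one, mul_comm] at hroot
  refine hroot.congr' ?_
  filter_upwards [huv.eventually_const_lt (by positivity : (0:ℝ) < 1 / q)] with r hr
  have hu : u r ≠ 0 := by rintro h; simp [h] at hr
  have hvr : |v r| ≠ 0 := by rintro h; simp [h] at hr
  rw [Pi.div_apply, Function.comp_apply, Real.mul_rpow (Real.exp_pos r).le (by positivity),
    ← Real.exp_mul, one_div q, Real.rpow_rpow_inv (abs_nonneg _) hq.ne', mul_div_assoc]
  field_simp

lemma le_extTime {f : ℝ → ℝ} {R : ℝ} (h : ∀ r ∈ Ioo 0 R, f r ≠ 0) :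
    (R : EReal) ≤ extTime f := by
  refine le_sInf ?_
  rintro _ ⟨r, hr, hfr, rfl⟩
  exact EReal.coe_le_coe_iff.2 (not_lt.1 fun hrR => h r ⟨hr, hrR⟩ hfr)

lemma extTime_eq_top {f : ℝ → ℝ} (h : ∀ r, 0 < r → f r ≠ 0) : extTime f = ⊤ :=
  (EReal.eq_top_iff_forall_lt _).2 fun y =>
    (EReal.coe_lt_coe_iff.2 (lt_add_one y)).trans_le (le_extTime fun r hr => h r hr.1)

namespace PsiRel

variable {p a : ℝ} {f fd ψ : ℝ → ℝ}

lemma tendsto_abs_div (hp : 1 < p) (ha : 0 < a) (hrel : PsiRel p a f fd ψ)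
    (hκ : Tendsto (fun y => ψ y * (1 - y) ^ (-p)) (𝓝[<] (1:ℝ)) (𝓝 ((p - 1) ^ (-p))))
    {l : Filter ℝ} (hev : ∀ᶠ r in l, 0 ≤ r ∧ 0 < f r ∧ (r : EReal) < extTime f)
    (hf0 : Tendsto f l (𝓝 0)) :
    Tendsto (fun r => |fd r| / f r) l (𝓝 (1 / (p - 1))) := by
  have hp1 : 0 < p - 1 := sub_pos.2 hp
  have hy : Tendsto (fun r => 1 - f r / a) l (𝓝[<] 1) := by
    refine tendsto_nhdsWithin_iff.2 ⟨?_, ?_⟩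
    · simpa using tendsto_const_nhds.sub (hf0.div_const a)
    · filter_upwards [hev] with r hr
      exact sub_lt_self 1 (div_pos hr.2.1 ha)
  have hpow : Tendsto (fun r => (|fd r| / f r) ^ p) l (𝓝 ((p - 1) ^ (-p))) := by
    refine (hκ.comp hy).congr' ?_
    filter_upwards [hev] with r ⟨hr0, hfr, hrR⟩
    rw [Function.comp_apply, hrel r hr0 hrR, sub_sub_cancel,
      Real.rpow_neg (div_pos hfr ha).le, Real.div_rpow hfr.le ha.le,
      Real.div_rpow (abs_nonneg _) hfr.le]
    have : a ^ p ≠ 0 := (Real.rpow_pos_of_pos ha p).ne'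
    field_simp
  have hroot := (Real.continuousAt_rpow_const _ (1 / p)
    (Or.inl (Real.rpow_pos_of_pos hp1 _).ne')).tendsto.comp hpow
  rw [← Real.rpow_mul hp1.le, neg_mul, mul_one_div_cancel (by linarith), Real.rpow_neg_one,
    ← one_div] at hroot
  refine hroot.congr' ?_
  filter_upwards [hev] with r hr
  rw [Function.comp_apply, ← Real.rpow_mul (div_nonneg (abs_nonneg _) hr.2.1.le),
    mul_one_div_cancel (by linarith), Real.rpow_one]

end PsiRel

namespace IsSol

variable {p a : ℝ} {f fd gd : ℝ → ℝ}

lemma continuousOn (hf : IsSol p a f fd gd) : ContinuousOn f (Ici 0) :=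
  fun r hr => (hf.1 r hr).continuousWithinAt

lemma hasDerivAt (hf : IsSol p a f fd gd) {r : ℝ} (hr : 0 < r) : HasDerivAt f (fd r) r :=
  (hf.1 r hr.le).hasDerivAt (Ici_mem_nhds hr)

lemma gd_eq (hp : 1 < p) (hf : IsSol p a f fd gd) {r : ℝ} (hr : 0 ≤ r) :
    gd r = |fd r| ^ (p - 1) - f r := by
  have hcont := hf.continuousOn
  obtain ⟨-, hfd, -, hgd, hode, -⟩ := hf
  rcases hr.eq_or_lt with rfl | hr
  · set F := fun r => gd r - (|fd r| ^ (p - 1) - f r)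
    have hF : ContinuousWithinAt F (Ioi 0) 0 :=
      ((hgd 0 self_mem_Ici).sub (((hfd 0 self_mem_Ici).abs.rpow_const (Or.inr (by linarith))).sub
        (hcont 0 self_mem_Ici))).mono Ioi_subset_Ici_self
    have hF0 : Tendsto F (𝓝[>] 0) (𝓝 0) :=
      tendsto_const_nhds.congr' <| eventually_nhdsWithin_of_forall fun r hr => by
        simp only [F]; linarith [hode r hr]
    linarith [tendsto_nhds_unique hF hF0]
  · linarith [hode r hr]

lemma hasDerivWithinAt_flux (hp : 1 < p) (hf : IsSol p a f fd gd) {r : ℝ} (hr : 0 ≤ r) :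
    HasDerivWithinAt (fun s => |fd s| ^ (p - 2) * fd s)
      (|(|fd r| ^ (p - 2) * fd r)| - f r) (Ici 0) r := by
  rw [abs_abs_rpow_sub_two_mul_self hp.ne', ← hf.gd_eq hp hr]
  exact hf.2.2.1 r hr

/-- The flux `|f'|^{p-2} f'` starts at `0` and, by the equation, has derivative `-f < 0` wherever
it vanishes, so it cannot become positive while `f > 0`. -/
lemma fd_nonpos (hp : 1 < p) (hf : IsSol p a f fd gd) {b : ℝ}
    (hb : ∀ s ∈ Icc 0 b, 0 < f s) : ∀ r ∈ Icc 0 b, fd r ≤ 0 := by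
  set g := fun s => |fd s| ^ (p - 2) * fd s
  have hg : ContinuousOn g (Ici 0) := fun r hr => (hf.2.2.1 r hr).continuousWithinAt
  suffices Icc 0 b ⊆ {r | g r ≤ 0} from fun r hr => nonpos_of_abs_rpow_mul_self_nonpos (this hr)
  refine IsClosed.Icc_subset_of_forall_mem_nhdsWithin ?_ ?_ ?_
  · rw [inter_comm]
    exact (hg.mono Icc_subset_Ici_self).preimage_isClosed_of_isClosed isClosed_Icc isClosed_Iic
  · simp [g, hf.2.2.2.2.2.2]
  · rintro x ⟨hgx, hx0, hxb⟩
    rcases (show g x ≤ 0 from hgx).eq_or_lt with hzero | hneg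
    · refine mem_of_superset (eventually_nhdsGT_neg_of_hasDerivWithinAt
        ((hf.hasDerivWithinAt_flux hp hx0).mono fun y hy => hx0.trans hy.out.le) hzero ?_)
        fun y (hy : g y < 0) => hy.le
      rw [show |(|fd x| ^ (p - 2) * fd x)| = 0 from abs_eq_zero.2 hzero, zero_sub, neg_lt_zero]
      exact hb x ⟨hx0, hxb.le⟩
    · exact mem_of_superset (((hg x hx0).mono fun y hy => hx0.trans hy.out.le).eventually_lt_const
        hneg) fun y (hy : g y < 0) => hy.le

lemma pos_of_psiRel {ψ : ℝ → ℝ} (hp : 1 < p) (ha : 0 < a) (hf : IsSol p a f fd gd)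
    (hrel : PsiRel p a f fd ψ)
    (hκ : Tendsto (fun y => ψ y * (1 - y) ^ (-p)) (𝓝[<] (1:ℝ)) (𝓝 ((p - 1) ^ (-p)))) :
    ∀ r, 0 ≤ r → 0 < f r := by
  intro b hb
  by_contra! hfb
  obtain ⟨R, ⟨hR, -⟩, hfR, hpos⟩ := exists_first_zero hb
    (hf.continuousOn.mono Icc_subset_Ici_self) (hf.2.2.2.2.2.1 ▸ ha) hfb
  have hfd : ∀ r ∈ Ico 0 R, fd r ≤ 0 := fun r hr =>
    hf.fd_nonpos hp (fun s hs => hpos s ⟨hs.1, hs.2.trans_lt hr.2⟩) r ⟨hr.1, le_rfl⟩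
  have hf0 : Tendsto f (𝓝[<] R) (𝓝 0) :=
    hfR ▸ (hf.continuousOn R hR.le).mono_of_mem_nhdsWithin
      (mem_of_superset (Ioo_mem_nhdsLT hR) fun r hr => hr.1.le)
  have hev : ∀ᶠ r in 𝓝[<] R, 0 ≤ r ∧ 0 < f r ∧ (r : EReal) < extTime f := by
    filter_upwards [Ioo_mem_nhdsLT hR] with r hr
    exact ⟨hr.1.le, hpos r ⟨hr.1.le, hr.2⟩, (EReal.coe_lt_coe_iff.2 hr.2).trans_le
      (le_extTime fun s hs => (hpos s ⟨hs.1.le, hs.2⟩).ne')⟩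
  obtain ⟨c, hcR, hc⟩ := mem_nhdsLT_iff_exists_Ico_subset.1
    (((hrel.tendsto_abs_div hp ha hκ hev hf0).eventually_lt_const (lt_add_one _)).and
      (Ioo_mem_nhdsLT hR))
  refine not_tendsto_nhdsLT_zero_of_le_deriv_div (C := -(1 / (p - 1) + 1)) (mem_Iio.1 hcR)
    (fun r hr => hf.hasDerivAt (hc hr).2.1) (fun r hr => hpos r ⟨(hc hr).2.1.le, hr.2⟩)
    (fun r hr => ?_) hf0
  rw [← neg_neg (fd r), ← abs_of_nonpos (hfd r ⟨(hc hr).2.1.le, hr.2⟩), neg_div, neg_le_neg_iff]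
  exact (hc hr).1.le

lemma continuousOn_exp_mul (hf : IsSol p a f fd gd) :
    ContinuousOn (fun σ => Real.exp σ * f σ) (Ici 0) :=
  Real.continuous_exp.continuousOn.mul hf.continuousOn

lemma fd_nonpos_of_pos (hp : 1 < p) (hf : IsSol p a f fd gd) (hpos : ∀ r, 0 ≤ r → 0 < f r)
    {r : ℝ} (hr : 0 ≤ r) : fd r ≤ 0 :=
  hf.fd_nonpos hp (fun s hs => hpos s hs.1) r ⟨hr, le_rfl⟩

lemma exp_mul_rpow_eq_integral (hp : 1 < p) (hf : IsSol p a f fd gd)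
    (hpos : ∀ r, 0 ≤ r → 0 < f r) {r : ℝ} (hr : 0 ≤ r) :
    Real.exp r * |fd r| ^ (p - 1) = ∫ σ in (0:ℝ)..r, Real.exp σ * f σ := by
  have hfd := fun s (hs : 0 ≤ s) => hf.fd_nonpos_of_pos hp hpos hs
  set E := fun s => Real.exp s * (|fd s| ^ (p - 2) * fd s)
  have hE : ∀ s, 0 ≤ s → E s = -(Real.exp s * |fd s| ^ (p - 1)) := fun s hs => by
    simp only [E, abs_rpow_sub_two_mul_self_of_nonpos hp.ne' (hfd s hs), mul_neg]
  have hderiv : ∀ s ∈ Ioo 0 r, HasDerivAt E (-(Real.exp s * f s)) s := fun s hs => by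
    refine (((Real.hasDerivAt_exp s).hasDerivWithinAt.mul
      (hf.hasDerivWithinAt_flux hp hs.1.le)).hasDerivAt (Ici_mem_nhds hs.1)).congr_deriv ?_
    rw [abs_rpow_sub_two_mul_self_of_nonpos hp.ne' (hfd s hs.1.le), abs_neg,
      abs_of_nonneg (Real.rpow_nonneg (abs_nonneg _) _)]
    ring
  have hcont : ContinuousOn E (Icc 0 r) := Real.continuous_exp.continuousOn.mul
    fun s hs => (hf.2.2.1 s hs.1).continuousWithinAt.mono Icc_subset_Ici_self
  have hint : IntervalIntegrable (fun σ => Real.exp σ * f σ) volume 0 r :=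
    (hf.continuousOn_exp_mul.mono (uIcc_of_le hr ▸ Icc_subset_Ici_self)).intervalIntegrable
  have hftc := intervalIntegral.integral_eq_sub_of_hasDerivAt_of_le hr hcont hderiv hint.neg
  rw [intervalIntegral.integral_neg, hE r hr, hE 0 le_rfl, hf.2.2.2.2.2.2] at hftc
  simp only [abs_zero, Real.zero_rpow (sub_ne_zero.2 hp.ne'), mul_zero, neg_zero, sub_zero] at hftc
  linarith

lemma antitoneOn (hp : 1 < p) (hf : IsSol p a f fd gd) (hpos : ∀ r, 0 ≤ r → 0 < f r) :
    AntitoneOn f (Ici 0) := by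
  refine antitoneOn_of_deriv_nonpos (convex_Ici 0) hf.continuousOn ?_ ?_ <;>
    rw [interior_Ici] <;> intro x (hx : 0 < x)
  · exact (hf.hasDerivAt hx).differentiableAt.differentiableWithinAt
  · exact (hf.hasDerivAt hx).deriv ▸ hf.fd_nonpos_of_pos hp hpos hx.le

/-- A positive lower bound `ε ≤ f` feeds `e^r |f'(r)|^{p-1} = ∫_0^r e^σ f ≥ ε (e^r - 1)`. -/
lemma fd_le_neg_of_le (hp : 1 < p) (hf : IsSol p a f fd gd) (hpos : ∀ r, 0 ≤ r → 0 < f r)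
    {ε : ℝ} (hε : 0 < ε) (hge : ∀ r, 0 ≤ r → ε ≤ f r) {r : ℝ} (hr : 1 ≤ r) :
    fd r ≤ -(ε / 2) ^ (1 / (p - 1)) := by
  have hr0 : 0 ≤ r := zero_le_one.trans hr
  have hgrow : ε * (Real.exp r - 1) ≤ Real.exp r * |fd r| ^ (p - 1) := by
    rw [hf.exp_mul_rpow_eq_integral hp hpos hr0, ← Real.exp_zero, ← integral_exp,
      ← intervalIntegral.integral_const_mul]
    refine intervalIntegral.integral_mono_on hr0
      ((continuous_const.mul Real.continuous_exp).intervalIntegrable 0 r)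
      ((hf.continuousOn_exp_mul.mono (uIcc_of_le hr0 ▸ Icc_subset_Ici_self)).intervalIntegrable)
      fun σ hσ => ?_
    rw [mul_comm]
    exact mul_le_mul_of_nonneg_left (hge σ hσ.1) (Real.exp_pos σ).le
  have hexp : 2 ≤ Real.exp r := by linarith [Real.add_one_le_exp r]
  have hhalf : ε / 2 ≤ |fd r| ^ (p - 1) :=
    le_of_mul_le_mul_left (by nlinarith) (Real.exp_pos r)
  have hroot : (ε / 2) ^ (1 / (p - 1)) ≤ |fd r| :=
    calc (ε / 2) ^ (1 / (p - 1)) ≤ (|fd r| ^ (p - 1)) ^ (1 / (p - 1)) :=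
          Real.rpow_le_rpow (by positivity) hhalf (by positivity)
      _ = |fd r| := by
          rw [one_div, Real.rpow_rpow_inv (abs_nonneg _) (sub_ne_zero.2 hp.ne')]
  linarith [abs_of_nonpos (hf.fd_nonpos_of_pos hp hpos hr0)]

/-- `f` decreases; if it stayed above some `ε > 0`, then `f' ≤ -c < 0` on `[1,∞)` would drive it
below zero. -/
lemma tendsto_atTop_zero (hp : 1 < p) (hf : IsSol p a f fd gd)
    (hpos : ∀ r, 0 ≤ r → 0 < f r) : Tendsto f atTop (𝓝 0) := by
  suffices h : ∀ ε > 0, ∃ r₀ ≥ 0, f r₀ < ε by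
    refine Metric.tendsto_atTop.2 fun ε hε => ?_
    obtain ⟨r₀, hr₀, hfr₀⟩ := h ε hε
    refine ⟨r₀, fun r hr => ?_⟩
    rw [Real.dist_eq, sub_zero, abs_of_pos (hpos r (hr₀.trans hr))]
    exact (hf.antitoneOn hp hpos hr₀ (hr₀.trans hr) hr).trans_lt hfr₀
  intro ε hε
  by_contra! hge
  set c := (ε / 2) ^ (1 / (p - 1))
  have hc : 0 < c := by positivity
  have hf1 := hpos 1 zero_le_one
  have hdrop := image_sub_le_mul_sub_of_hasDerivAt_le (x := 1) (y := 1 + f 1 / c)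
    (by linarith [div_pos hf1 hc]) (fun r hr => hf.hasDerivAt (zero_lt_one.trans_le hr.1))
    fun r hr => hf.fd_le_neg_of_le hp hpos hε hge hr.1
  rw [add_sub_cancel_left, neg_mul, mul_div_cancel₀ _ hc.ne'] at hdrop
  linarith [hpos (1 + f 1 / c) (by positivity)]

lemma integrableOn_exp_mul (hp : p ∈ Ioo 1 2) (hf : IsSol p a f fd gd)
    (hpos : ∀ r, 0 ≤ r → 0 < f r)
    (hratio : Tendsto (fun r => |fd r| / f r) atTop (𝓝 (1 / (p - 1)))) :
    IntegrableOn (fun σ => Real.exp σ * f σ) (Ioi 0) := by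
  obtain ⟨c, hc1, hcp⟩ := exists_between (one_lt_one_div (sub_pos.2 hp.1) (by linarith [hp.2]))
  obtain ⟨r₀, hr₀⟩ := eventually_atTop.1 (hratio.eventually_const_lt hcp)
  set r₁ := max r₀ 1
  have hr₁ : 0 < r₁ := zero_lt_one.trans_le (le_max_right _ _)
  have hdecay : ∀ x ∈ Ioi r₁,
      ‖Real.exp x * f x‖ ≤ f r₁ * Real.exp (c * r₁) * Real.exp (-(c - 1) * x) := by
    intro x hx
    have hfx := le_mul_exp_of_deriv_div_le (C := -c) hx.out.le
      (fun r hr => hf.hasDerivAt (hr₁.trans_le hr.1)) (fun r hr => hpos r (hr₁.le.trans hr.1))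
      fun r hr => by
        rw [← neg_neg (fd r), ← abs_of_nonpos (hf.fd_nonpos_of_pos hp.1 hpos (hr₁.le.trans hr.1)),
          neg_div, neg_le_neg_iff]
        exact (hr₀ r ((le_max_left _ _).trans hr.1)).le
    rw [Real.norm_of_nonneg (mul_pos (Real.exp_pos x) (hpos x (hr₁.trans hx).le)).le]
    calc Real.exp x * f x ≤ Real.exp x * (f r₁ * Real.exp (-c * (x - r₁))) :=
          mul_le_mul_of_nonneg_left hfx (Real.exp_pos x).le
      _ = f r₁ * Real.exp (c * r₁) * Real.exp (-(c - 1) * x) := by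
          rw [mul_left_comm, ← Real.exp_add, mul_assoc, ← Real.exp_add]
          ring_nf
  rw [← Ioc_union_Ioi_eq_Ioi hr₁.le]
  refine IntegrableOn.union ?_ ?_
  · exact ((hf.continuousOn_exp_mul.mono Icc_subset_Ici_self).integrableOn_Icc).mono_set
      Ioc_subset_Icc_self
  · exact ((exp_neg_integrableOn_Ioi r₁ (sub_pos.2 hc1)).const_mul _).mono'
      ((hf.continuousOn_exp_mul.mono fun x hx => hr₁.le.trans hx.out.le).aestronglyMeasurable
        measurableSet_Ioi)
      ((ae_restrict_iff' measurableSet_Ioi).2 (.of_forall hdecay))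

end IsSol

/-- If `ψ(y)(1-y)^{-p} → (p-1)^{-p}` as `y → 1` (so that `R(a) = ∞`),
then `I := ∫_0^∞ e^σ f(σ) dσ` is finite, `e^r |f'(r)|^{p-1} → I` as `r → ∞`, and
`e^{r/(p-1)} f(r) → (p-1) I^{1/(p-1)} > 0` as `r → ∞`. -/
theorem stmt18 (p a : ℝ) (hp : p ∈ Set.Ioo (1:ℝ) 2) (ha : 0 < a)
    (f fd gd ψ : ℝ → ℝ) (hf : IsSol p a f fd gd) (hrel : PsiRel p a f fd ψ)
    (hκ : Tendsto (fun y => ψ y * (1-y) ^ (-p)) (𝓝[<] (1:ℝ)) (𝓝 ((p-1) ^ (-p)))) :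
    extTime f = ⊤ ∧
    IntegrableOn (fun σ => Real.exp σ * f σ) (Set.Ioi 0) volume ∧
    Tendsto (fun r => Real.exp r * |fd r| ^ (p-1)) atTop
      (𝓝 (∫ σ in Set.Ioi (0:ℝ), Real.exp σ * f σ)) ∧
    0 < (p-1) * (∫ σ in Set.Ioi (0:ℝ), Real.exp σ * f σ) ^ (1/(p-1)) ∧
    Tendsto (fun r => Real.exp (r/(p-1)) * f r) atTop
      (𝓝 ((p-1) * (∫ σ in Set.Ioi (0:ℝ), Real.exp σ * f σ) ^ (1/(p-1)))) := by
  have hp1 : 0 < p - 1 := sub_pos.2 hp.1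
  have hpos := hf.pos_of_psiRel hp.1 ha hrel hκ
  have htop : extTime f = ⊤ := extTime_eq_top fun r hr => (hpos r hr.le).ne'
  have hratio : Tendsto (fun r => |fd r| / f r) atTop (𝓝 (1 / (p - 1))) := by
    refine hrel.tendsto_abs_div hp.1 ha hκ ?_ (hf.tendsto_atTop_zero hp.1 hpos)
    filter_upwards [eventually_ge_atTop 0] with r hr
    exact ⟨hr, hpos r hr, htop ▸ EReal.coe_lt_top r⟩
  have hint := hf.integrableOn_exp_mul hp hpos hratio
  have hlim : Tendsto (fun r => Real.exp r * |fd r| ^ (p - 1)) atTop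
      (𝓝 (∫ σ in Ioi (0:ℝ), Real.exp σ * f σ)) := by
    refine (intervalIntegral_tendsto_integral_Ioi 0 hint tendsto_id).congr' ?_
    filter_upwards [eventually_ge_atTop 0] with r hr
    exact (hf.exp_mul_rpow_eq_integral hp.1 hpos hr).symm
  have hI : 0 < ∫ σ in Ioi (0:ℝ), Real.exp σ * f σ :=
    integral_Ioi_pos_of_pos hint fun x hx => mul_pos (Real.exp_pos x) (hpos x (le_of_lt hx))
  exact ⟨htop, hint, hlim, by positivity, tendsto_exp_div_mul_of_tendsto hp1 hI hlim hratio⟩
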